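/- Let (x, y) be a bivariate centered Gaussian random vector. Then E[x·y] = E[x·exp(y − E[y²]/2)]. -/

import Mathlib

open MeasureTheory ProbabilityTheory Real
open scoped NNReal

/-!
With `x = c X - s Y` and `y = s X + c Y` for independent centred Gaussians `X`, `Y`, the
expectation `E[x e^y]` factors into one-dimensional Gaussian integrals, and
`E[X e^{tX}] = v t e^{v t² / 2}` is the derivative of the moment generating function
`e^{v t² / 2}`. Hence `E[x e^y] = E[x y] e^{E[y²] / 2}`.
-/

namespace ProbabilityTheory

section OneGaussian

variable {Ω : Type*} [MeasurableSpace Ω] {μ : Measure Ω} [IsProbabilityMeasure μ]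
  {X : Ω → ℝ} {m : ℝ} {v : ℝ≥0}

lemma integrableExpSet_eq_univ_of_map_eq_gaussianReal (hX : μ.map X = gaussianReal m v) :
    integrableExpSet X μ = Set.univ := by
  ext t
  simp only [integrableExpSet, Set.mem_ofPred_eq, Set.mem_univ, iff_true]
  rw [← mgf_pos_iff, mgf_gaussianReal hX]
  exact exp_pos _

lemma integrable_exp_mul_of_map_eq_gaussianReal (hX : μ.map X = gaussianReal m v) (t : ℝ) :
    Integrable (fun ω ↦ exp (t * X ω)) μ := by
  simpa [integrableExpSet] using (integrableExpSet_eq_univ_of_map_eq_gaussianReal hX).ge trivial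

lemma integrable_mul_exp_mul_of_map_eq_gaussianReal (hX : μ.map X = gaussianReal m v) (t : ℝ) :
    Integrable (fun ω ↦ X ω * exp (t * X ω)) μ := by
  simpa using integrable_pow_mul_exp_of_mem_interior_integrableExpSet
    (by simp [integrableExpSet_eq_univ_of_map_eq_gaussianReal hX]) 1

lemma memLp_of_map_eq_gaussianReal (hX : μ.map X = gaussianReal m v) (p : ℝ≥0) :
    MemLp X p μ :=
  memLp_of_mem_interior_integrableExpSet
    (by simp [integrableExpSet_eq_univ_of_map_eq_gaussianReal hX]) p

lemma integrable_of_map_eq_gaussianReal (hX : μ.map X = gaussianReal m v) : Integrable X μ :=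
  integrable_of_mem_interior_integrableExpSet
    (by simp [integrableExpSet_eq_univ_of_map_eq_gaussianReal hX])

lemma integral_mul_exp_mul_of_map_eq_gaussianReal (hX : μ.map X = gaussianReal m v) (t : ℝ) :
    ∫ ω, X ω * exp (t * X ω) ∂μ = (m + v * t) * exp (m * t + v * t ^ 2 / 2) := by
  rw [← deriv_mgf (by simp [integrableExpSet_eq_univ_of_map_eq_gaussianReal hX]),
    funext (mgf_gaussianReal hX)]
  have hpoly : HasDerivAt (fun t : ℝ ↦ m * t + v * t ^ 2 / 2) (m + v * t) t := by
    refine (((hasDerivAt_id' t).const_mul m).fun_add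
      (((hasDerivAt_pow 2 t).const_mul (v : ℝ)).div_const 2)).congr_deriv ?_
    norm_num
    ring
  rw [hpoly.exp.deriv, mul_comm]

lemma integral_of_map_eq_gaussianReal (hX : μ.map X = gaussianReal m v) :
    ∫ ω, X ω ∂μ = m := by
  simpa using integral_mul_exp_mul_of_map_eq_gaussianReal hX 0

lemma integral_sq_of_map_eq_gaussianReal (hX : μ.map X = gaussianReal m v) :
    ∫ ω, X ω ^ 2 ∂μ = m ^ 2 + v := by
  have hLaw : HasLaw X (gaussianReal m v) μ :=
    ⟨(integrable_of_map_eq_gaussianReal hX).aemeasurable, hX⟩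
  have hvar := variance_eq_sub (memLp_of_map_eq_gaussianReal hX 2)
  rw [hLaw.variance_eq, variance_id_gaussianReal, integral_of_map_eq_gaussianReal hX] at hvar
  change (v : ℝ) = ∫ ω, X ω ^ 2 ∂μ - m ^ 2 at hvar
  linarith

end OneGaussian

section IndependentGaussians

variable {Ω : Type*} [MeasurableSpace Ω] {μ : Measure Ω} [IsProbabilityMeasure μ]
  {X Y : Ω → ℝ} {v w : ℝ≥0}

lemma IndepFun.integral_add_mul_add_of_gaussianReal (hXY : IndepFun X Y μ)
    (hX : μ.map X = gaussianReal 0 v) (hY : μ.map Y = gaussianReal 0 w) (a b c d : ℝ) :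
    ∫ ω, (a * X ω + b * Y ω) * (c * X ω + d * Y ω) ∂μ = a * c * v + b * d * w := by
  have iX2 := (memLp_of_map_eq_gaussianReal hX 2).integrable_sq
  have iY2 := (memLp_of_map_eq_gaussianReal hY 2).integrable_sq
  have iXY : Integrable (fun ω ↦ X ω * Y ω) μ := hXY.integrable_mul
    (integrable_of_map_eq_gaussianReal hX) (integrable_of_map_eq_gaussianReal hY)
  have hXY0 : ∫ ω, X ω * Y ω ∂μ = 0 := by
    rw [hXY.integral_fun_mul_eq_mul_integral (integrable_of_map_eq_gaussianReal hX).1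
      (integrable_of_map_eq_gaussianReal hY).1, integral_of_map_eq_gaussianReal hX, zero_mul]
  calc ∫ ω, (a * X ω + b * Y ω) * (c * X ω + d * Y ω) ∂μ
      = ∫ ω, a * c * X ω ^ 2 + (a * d + b * c) * (X ω * Y ω) + b * d * Y ω ^ 2 ∂μ := by
        congr 1; ext ω; ring
    _ = a * c * v + b * d * w := by
      rw [integral_add ((iX2.const_mul _).fun_add (iXY.const_mul _)) (iY2.const_mul _),
        integral_add (iX2.const_mul _) (iXY.const_mul _), integral_const_mul, integral_const_mul,
        integral_const_mul, integral_sq_of_map_eq_gaussianReal hX,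
        integral_sq_of_map_eq_gaussianReal hY, hXY0]
      ring

lemma IndepFun.integral_add_mul_exp_add_of_gaussianReal (hXY : IndepFun X Y μ)
    (hX : μ.map X = gaussianReal 0 v) (hY : μ.map Y = gaussianReal 0 w) (a b c d : ℝ) :
    ∫ ω, (a * X ω + b * Y ω) * exp (c * X ω + d * Y ω) ∂μ
      = (a * c * v + b * d * w) * exp ((v * c ^ 2 + w * d ^ 2) / 2) := by
  have hXm := (integrable_of_map_eq_gaussianReal hX).aemeasurable
  have hYm := (integrable_of_map_eq_gaussianReal hY).aemeasurable
  have hXe : Integrable (fun ω ↦ X ω * exp (c * X ω) * exp (d * Y ω)) μ :=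
    (hXY.comp (φ := fun u ↦ u * exp (c * u)) (ψ := fun u ↦ exp (d * u)) (by fun_prop)
      (by fun_prop)).integrable_mul (integrable_mul_exp_mul_of_map_eq_gaussianReal hX c)
      (integrable_exp_mul_of_map_eq_gaussianReal hY d)
  have heY : Integrable (fun ω ↦ exp (c * X ω) * (Y ω * exp (d * Y ω))) μ :=
    (hXY.comp (φ := fun u ↦ exp (c * u)) (ψ := fun u ↦ u * exp (d * u)) (by fun_prop)
      (by fun_prop)).integrable_mul (integrable_exp_mul_of_map_eq_gaussianReal hX c)
      (integrable_mul_exp_mul_of_map_eq_gaussianReal hY d)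
  calc ∫ ω, (a * X ω + b * Y ω) * exp (c * X ω + d * Y ω) ∂μ
      = ∫ ω, a * (X ω * exp (c * X ω) * exp (d * Y ω))
          + b * (exp (c * X ω) * (Y ω * exp (d * Y ω))) ∂μ := by
        congr 1; ext ω; rw [exp_add]; ring
    _ = a * ((∫ ω, X ω * exp (c * X ω) ∂μ) * ∫ ω, exp (d * Y ω) ∂μ)
          + b * ((∫ ω, exp (c * X ω) ∂μ) * ∫ ω, Y ω * exp (d * Y ω) ∂μ) := by
        rw [integral_add (hXe.const_mul a) (heY.const_mul b), integral_const_mul,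
          integral_const_mul,
          hXY.integral_fun_comp_mul_comp (f := fun u ↦ u * exp (c * u))
            (g := fun u ↦ exp (d * u)) hXm hYm (by fun_prop) (by fun_prop),
          hXY.integral_fun_comp_mul_comp (f := fun u ↦ exp (c * u))
            (g := fun u ↦ u * exp (d * u)) hXm hYm (by fun_prop) (by fun_prop)]
    _ = (a * c * v + b * d * w) * exp ((v * c ^ 2 + w * d ^ 2) / 2) := by
        rw [integral_mul_exp_mul_of_map_eq_gaussianReal hX,
          integral_mul_exp_mul_of_map_eq_gaussianReal hY, ← mgf, ← mgf, mgf_gaussianReal hX,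
          mgf_gaussianReal hY]
        simp only [zero_add, zero_mul, add_div, exp_add]
        ring

end IndependentGaussians

end ProbabilityTheory

open ProbabilityTheory

/-- Let `(x, y)` be a bivariate centered Gaussian random vector, written (after
diagonalizing the covariance matrix) as `x = cos θ · X - sin θ · Y`,
`y = sin θ · X + cos θ · Y` with `X, Y` independent centered Gaussians.
Then `E[x·y] = E[x·exp(y − E[y²]/2)]`. -/
theorem bivariate_gaussian_exp_identity
    {Ω : Type*} [MeasurableSpace Ω] (μ : Measure Ω) [IsProbabilityMeasure μ]
    (X Y : Ω → ℝ) (σ τ : ℝ≥0) (θ : ℝ)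
    (hXY : IndepFun X Y μ)
    (hX : Measure.map X μ = gaussianReal 0 (σ ^ 2))
    (hY : Measure.map Y μ = gaussianReal 0 (τ ^ 2))
    (x y : Ω → ℝ)
    (hx : x = fun ω => Real.cos θ * X ω - Real.sin θ * Y ω)
    (hy : y = fun ω => Real.sin θ * X ω + Real.cos θ * Y ω) :
    ∫ ω, x ω * y ω ∂μ
      = ∫ ω, x ω * Real.exp (y ω - (∫ ω', (y ω') ^ 2 ∂μ) / 2) ∂μ := by
  subst hx hy
  set c := cos θ
  set s := sin θ
  have hneg : ∀ ω, c * X ω - s * Y ω = c * X ω + -s * Y ω := fun ω ↦ by ring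
  have hcov : ∫ ω, (c * X ω - s * Y ω) * (s * X ω + c * Y ω) ∂μ
      = c * s * σ ^ 2 - s * c * τ ^ 2 := by
    simp_rw [hneg, hXY.integral_add_mul_add_of_gaussianReal hX hY]
    push_cast
    ring
  have hvar : ∫ ω, (s * X ω + c * Y ω) ^ 2 ∂μ = σ ^ 2 * s ^ 2 + τ ^ 2 * c ^ 2 := by
    simp_rw [sq (s * _ + _), hXY.integral_add_mul_add_of_gaussianReal hX hY]
    push_cast
    ring
  have htilt : ∫ ω, (c * X ω - s * Y ω) * exp (s * X ω + c * Y ω) ∂μ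
      = (c * s * σ ^ 2 - s * c * τ ^ 2) * exp ((σ ^ 2 * s ^ 2 + τ ^ 2 * c ^ 2) / 2) := by
    simp_rw [hneg, hXY.integral_add_mul_exp_add_of_gaussianReal hX hY]
    push_cast
    ring
  simp_rw [hcov, hvar, exp_sub, mul_div_assoc', integral_div, htilt]
  exact (mul_div_cancel_right₀ _ (exp_pos _).ne').symm
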